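/- arXiv:2506.14110 — 7 statements merged into one kernel-verified Lean document; each statement's English description precedes it below -/
import Mathlib

section
/- Let X ~ Binomial(n, p) with p = (1−ε)/2 for some ε ∈ (0,1). Then P(X ≥ n/2) ≥ (1/2)·(1 − sqrt(1 − exp(−n·ε²/(1−ε²)))). -/
open Finset

lemma slud_sqrt_aux (a b : ℝ) (hb : 0 ≤ b) (hba : b ≤ a) (ha : a ≤ 1/2) :
    Real.sqrt a * Real.sqrt (1-b) + Real.sqrt b * Real.sqrt (1-a)
      ≤ 2 * (Real.sqrt a * Real.sqrt (1-a)) := by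
  have ha0 : 0 ≤ a := hb.trans hba
  have h1a : 0 ≤ 1 - a := by linarith
  have h1b : 0 ≤ 1 - b := by linarith
  set s1 := Real.sqrt a * Real.sqrt (1-b) with hs1def
  set s2 := Real.sqrt b * Real.sqrt (1-a) with hs2def
  set s3 := Real.sqrt a * Real.sqrt (1-a) with hs3def
  set s4 := Real.sqrt b * Real.sqrt (1-b) with hs4def
  have hs1 : s1^2 = a*(1-b) := by
    rw [hs1def, mul_pow, Real.sq_sqrt ha0, Real.sq_sqrt h1b]
  have hs2 : s2^2 = b*(1-a) := by
    rw [hs2def, mul_pow, Real.sq_sqrt hb, Real.sq_sqrt h1a]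
  have hs3 : s3^2 = a*(1-a) := by
    rw [hs3def, mul_pow, Real.sq_sqrt ha0, Real.sq_sqrt h1a]
  have hs4 : s4^2 = b*(1-b) := by
    rw [hs4def, mul_pow, Real.sq_sqrt hb, Real.sq_sqrt h1b]
  have h12 : s1 * s2 = s3 * s4 := by rw [hs1def, hs2def, hs3def, hs4def]; ring
  have hs30 : 0 ≤ s3 := by positivity
  have hs10 : 0 ≤ s1 := by positivity
  have hs20 : 0 ≤ s2 := by positivity
  have h43 : s4 ≤ s3 := by
    rw [hs3def, hs4def, ← Real.sqrt_mul hb, ← Real.sqrt_mul ha0]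
    exact Real.sqrt_le_sqrt (by nlinarith)
  have hsq : (s1 + s2)^2 ≤ (2*s3)^2 := by nlinarith [mul_le_mul_of_nonneg_left h43 hs30]
  calc s1 + s2 = Real.sqrt ((s1+s2)^2) := (Real.sqrt_sq (by positivity)).symm
    _ ≤ Real.sqrt ((2*s3)^2) := Real.sqrt_le_sqrt hsq
    _ = 2*s3 := Real.sqrt_sq (by positivity)

/-- Slud's anti-concentration inequality for the binomial distribution. -/
theorem stmt_2 (n : ℕ) (ε p : ℝ) (hε : 0 < ε) (hε1 : ε < 1) (hp : p = (1 - ε) / 2) :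
    (1 / 2) * (1 - Real.sqrt (1 - Real.exp (-((n : ℝ) * ε ^ 2) / (1 - ε ^ 2)))) ≤
    ∑ k ∈ (Finset.range (n + 1)).filter (fun k => n ≤ 2 * k),
      (n.choose k : ℝ) * p ^ k * (1 - p) ^ (n - k) := by
  set q : ℝ := 1 - p with hqdef
  have hp0 : 0 ≤ p := by rw [hp]; linarith
  have hq0 : 0 ≤ q := by rw [hqdef, hp]; linarith
  have hpq1 : p + q = 1 := by rw [hqdef]; ring
  have h4pq : 4 * (p * q) = 1 - ε^2 := by rw [hqdef, hp]; ring
  have hε2 : (0:ℝ) < 1 - ε^2 := by nlinarith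
  set A := (Finset.range (n + 1)).filter (fun k => n ≤ 2 * k) with hA
  set B := (Finset.range (n + 1)).filter (fun k => ¬ n ≤ 2 * k) with hB
  set a := ∑ k ∈ A, (n.choose k : ℝ) * p ^ k * q ^ (n - k) with ha
  set b := ∑ k ∈ B, (n.choose k : ℝ) * q ^ k * p ^ (n - k) with hb
  -- totals
  have htotp : ∑ k ∈ Finset.range (n+1), (n.choose k : ℝ) * p ^ k * q ^ (n-k) = 1 := by
    calc ∑ k ∈ Finset.range (n+1), (n.choose k : ℝ) * p ^ k * q ^ (n-k)
        = ∑ k ∈ Finset.range (n+1), p ^ k * q ^ (n-k) * (n.choose k : ℝ) := by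
          apply Finset.sum_congr rfl; intros; ring
      _ = (p + q)^n := (add_pow p q n).symm
      _ = 1 := by rw [hpq1, one_pow]
  have htotq : ∑ k ∈ Finset.range (n+1), (n.choose k : ℝ) * q ^ k * p ^ (n-k) = 1 := by
    calc ∑ k ∈ Finset.range (n+1), (n.choose k : ℝ) * q ^ k * p ^ (n-k)
        = ∑ k ∈ Finset.range (n+1), q ^ k * p ^ (n-k) * (n.choose k : ℝ) := by
          apply Finset.sum_congr rfl; intros; ring
      _ = (q + p)^n := (add_pow q p n).symm
      _ = 1 := by rw [add_comm, hpq1, one_pow]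
  have hsplitp : a + ∑ k ∈ B, (n.choose k : ℝ) * p ^ k * q ^ (n-k) = 1 := by
    rw [ha, hA, hB, Finset.sum_filter_add_sum_filter_not]; exact htotp
  have hsplitq : (∑ k ∈ A, (n.choose k : ℝ) * q ^ k * p ^ (n-k)) + b = 1 := by
    rw [hb, hA, hB, Finset.sum_filter_add_sum_filter_not]; exact htotq
  have hBsum : ∑ k ∈ B, (n.choose k : ℝ) * p ^ k * q ^ (n-k) = 1 - a := by linarith
  have hAsumq : ∑ k ∈ A, (n.choose k : ℝ) * q ^ k * p ^ (n-k) = 1 - b := by linarith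
  have hb0 : 0 ≤ b := by
    rw [hb]; apply Finset.sum_nonneg; intro k _; positivity
  have ha0 : 0 ≤ a := by
    rw [ha]; apply Finset.sum_nonneg; intro k _; positivity
  have h1a : 0 ≤ 1 - a := by
    rw [← hBsum]; apply Finset.sum_nonneg; intro k _; positivity
  have h1b : 0 ≤ 1 - b := by
    rw [← hAsumq]; apply Finset.sum_nonneg; intro k _; positivity
  -- b ≤ a by reflection
  have hba : b ≤ a := by
    have hrefl : b = ∑ k ∈ (Finset.range (n+1)).filter (fun k => n < 2 * k),
        (n.choose k : ℝ) * p ^ k * q ^ (n-k) := by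
      rw [hb, hB]
      refine Finset.sum_nbij' (fun k => n - k) (fun k => n - k) ?_ ?_ ?_ ?_ ?_
      · intro k hk
        simp only [Finset.mem_filter, Finset.mem_range] at hk ⊢
        omega
      · intro k hk
        simp only [Finset.mem_filter, Finset.mem_range] at hk ⊢
        omega
      · intro k hk
        simp only [Finset.mem_filter, Finset.mem_range] at hk
        omega
      · intro k hk
        simp only [Finset.mem_filter, Finset.mem_range] at hk
        omega
      · intro k hk
        simp only [Finset.mem_filter, Finset.mem_range] at hk
        have hkn : k ≤ n := by omega
        rw [Nat.choose_symm hkn, Nat.sub_sub_self hkn]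
        ring
    rw [hrefl, ha, hA]
    apply Finset.sum_le_sum_of_subset_of_nonneg
    · intro k hk
      simp only [Finset.mem_filter, Finset.mem_range] at hk ⊢
      omega
    · intro k _ _; positivity
  -- main case split
  by_cases hhalf : a ≤ 1/2
  · -- Cauchy-Schwarz
    set F : ℕ → ℝ := fun k => (n.choose k : ℝ) * p ^ k * q ^ (n-k) with hF
    set G : ℕ → ℝ := fun k => (n.choose k : ℝ) * q ^ k * p ^ (n-k) with hG
    have hFnn : ∀ k, 0 ≤ F k := fun k => by rw [hF]; positivity
    have hGnn : ∀ k, 0 ≤ G k := fun k => by rw [hG]; positivity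
    have hcsA : ∑ k ∈ A, Real.sqrt (F k) * Real.sqrt (G k)
        ≤ Real.sqrt a * Real.sqrt (1-b) := by
      have := Real.sum_sqrt_mul_sqrt_le A hFnn hGnn
      rwa [← ha, hAsumq] at this
    have hcsB : ∑ k ∈ B, Real.sqrt (F k) * Real.sqrt (G k)
        ≤ Real.sqrt b * Real.sqrt (1-a) := by
      have := Real.sum_sqrt_mul_sqrt_le B hFnn hGnn
      rw [hBsum, ← hb] at this
      rw [mul_comm]
      exact this
    set r : ℝ := Real.sqrt (p * q) with hr
    have hr0 : 0 ≤ r := Real.sqrt_nonneg _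
    have hFGk : ∀ k ∈ Finset.range (n+1),
        Real.sqrt (F k) * Real.sqrt (G k) = (n.choose k : ℝ) * r^n := by
      intro k hk
      rw [Finset.mem_range] at hk
      have hkn : k ≤ n := by omega
      rw [← Real.sqrt_mul (hFnn k)]
      have hrr : (r^n)^2 = (p*q)^n := by
        rw [← pow_mul, mul_comm n 2, pow_mul, hr, Real.sq_sqrt (by positivity : (0:ℝ) ≤ p*q)]
      have hpqn : (p*q)^n = p^k * p^(n-k) * (q^k * q^(n-k)) := by
        rw [mul_pow, ← pow_add, ← pow_add, Nat.add_sub_cancel' hkn]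
      have : F k * G k = ((n.choose k : ℝ) * r^n)^2 := by
        rw [mul_pow, hrr, hpqn, hF, hG]
        dsimp only
        ring
      rw [this, Real.sqrt_sq (by positivity)]
    have hBC : (2*r)^n ≤ Real.sqrt a * Real.sqrt (1-b) + Real.sqrt b * Real.sqrt (1-a) := by
      have hsum : ∑ k ∈ Finset.range (n+1), Real.sqrt (F k) * Real.sqrt (G k) = (2*r)^n := by
        rw [Finset.sum_congr rfl hFGk, ← Finset.sum_mul]
        rw [← Nat.cast_sum, Nat.sum_range_choose]
        push_cast
        ring
      calc (2*r)^n = ∑ k ∈ Finset.range (n+1), Real.sqrt (F k) * Real.sqrt (G k) := hsum.symm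
        _ = (∑ k ∈ A, Real.sqrt (F k) * Real.sqrt (G k))
            + ∑ k ∈ B, Real.sqrt (F k) * Real.sqrt (G k) := by
            rw [hA, hB, Finset.sum_filter_add_sum_filter_not]
        _ ≤ _ := add_le_add hcsA hcsB
    have hBC2 : (2*r)^n ≤ 2 * (Real.sqrt a * Real.sqrt (1-a)) :=
      hBC.trans (slud_sqrt_aux a b hb0 hba hhalf)
    have hpow : (1 - ε^2)^n ≤ 4 * (a * (1-a)) := by
      have h1 : ((2*r)^n)^2 ≤ (2 * (Real.sqrt a * Real.sqrt (1-a)))^2 := by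
        apply pow_le_pow_left₀ (by positivity) hBC2 2
      calc (1 - ε^2)^n = ((2*r)^n)^2 := by
            rw [← pow_mul, mul_comm n 2, pow_mul, mul_pow, hr,
              Real.sq_sqrt (by positivity : (0:ℝ) ≤ p * q), ← h4pq]
            norm_num
        _ ≤ (2 * (Real.sqrt a * Real.sqrt (1-a)))^2 := h1
        _ = 4 * (a * (1-a)) := by
            rw [mul_pow, mul_pow, Real.sq_sqrt ha0, Real.sq_sqrt h1a]
            norm_num
    have hexp : Real.exp (-((n : ℝ) * ε ^ 2) / (1 - ε ^ 2)) ≤ (1 - ε^2)^n := by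
      have hsingle : Real.exp (-(ε^2/(1-ε^2))) ≤ 1 - ε^2 := by
        have h := Real.add_one_le_exp (ε^2/(1-ε^2))
        have hpos : (0:ℝ) < Real.exp (ε^2/(1-ε^2)) := Real.exp_pos _
        rw [Real.exp_neg]
        rw [inv_le_comm₀ hpos hε2] at *
        calc (1-ε^2)⁻¹ = 1 + ε^2/(1-ε^2) := by field_simp; ring
          _ ≤ Real.exp (ε^2/(1-ε^2)) := by linarith
      calc Real.exp (-((n : ℝ) * ε ^ 2) / (1 - ε ^ 2))
          = Real.exp ((n:ℝ) * (-(ε^2/(1-ε^2)))) := by ring_nf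
        _ = (Real.exp (-(ε^2/(1-ε^2))))^n := Real.exp_nat_mul _ n
        _ ≤ (1 - ε^2)^n := pow_le_pow_left₀ (Real.exp_pos _).le hsingle n
    have hkey : (1 - 2*a)^2 ≤ 1 - Real.exp (-((n : ℝ) * ε ^ 2) / (1 - ε ^ 2)) := by
      nlinarith
    have hfin : 1 - 2*a ≤ Real.sqrt (1 - Real.exp (-((n : ℝ) * ε ^ 2) / (1 - ε ^ 2))) := by
      calc 1 - 2*a = Real.sqrt ((1-2*a)^2) := (Real.sqrt_sq (by linarith)).symm
        _ ≤ _ := Real.sqrt_le_sqrt hkey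
    linarith
  · have : (0:ℝ) ≤ Real.sqrt (1 - Real.exp (-((n : ℝ) * ε ^ 2) / (1 - ε ^ 2))) :=
      Real.sqrt_nonneg _
    linarith
end

section
/- Let X ~ Binomial(m, p) with p = (1−ε)/2, where 0 < ε < 1/2 and m·ε² ≤ 1/8. Then P(X ≥ m/2) ≥ 1/10. -/
lemma aux_sum_1 (n : ℕ) :
    ∑ k ∈ Finset.range (n+1), 2 * k * n.choose k = n * 2 ^ n := by
  cases n with
  | zero => simp
  | succ j =>
    rw [Finset.sum_range_succ']
    have h : ∀ i, 2 * (i+1) * (j+1).choose (i+1) = 2 * ((j+1) * j.choose i) := by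
      intro i
      have h1 := Nat.add_one_mul_choose_eq j i
      ring_nf
      ring_nf at h1
      omega
    simp only [h, ← Finset.mul_sum, Nat.sum_range_choose]
    ring
lemma aux_sum_2 (n : ℕ) :
    ∑ k ∈ Finset.range (n+1), 4 * (k * k) * n.choose k = n * (n+1) * 2 ^ n := by
  match n with
  | 0 => simp
  | 1 => decide
  | (j+2) =>
    rw [Finset.sum_range_succ']
    have h : ∀ i, 4 * ((i+1) * (i+1)) * (j+2).choose (i+1) = 2 * (2 * (i+1) * ((j+2) * (j+1).choose i)) := by
      intro i
      have h1 := Nat.add_one_mul_choose_eq (j+1) i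
      ring_nf
      ring_nf at h1
      nlinarith [h1]
    simp only [h, ← Finset.mul_sum]
    have h2 : ∑ i ∈ Finset.range (j+2), 2 * (i+1) * ((j+2) * (j+1).choose i)
        = (j+2) * ∑ i ∈ Finset.range (j+2), (2 * i * (j+1).choose i + 2 * (j+1).choose i) := by
      rw [Finset.mul_sum]
      refine Finset.sum_congr rfl fun i _ => by ring
    rw [h2, Finset.sum_add_distrib, aux_sum_1, ← Finset.mul_sum, Nat.sum_range_choose]
    ring

lemma aux_var (n : ℕ) :
    ∑ k ∈ Finset.range (n+1), (n.choose k : ℝ) * (2*(k:ℝ) - (n:ℝ))^2 = (n:ℝ) * 2^n := by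
  have c1 : ∑ k ∈ Finset.range (n+1), (2 * (k:ℝ) * (n.choose k : ℝ)) = (n:ℝ) * 2 ^ n := by
    have := congrArg (Nat.cast (R := ℝ)) (aux_sum_1 n)
    push_cast at this
    simpa using this
  have c2 : ∑ k ∈ Finset.range (n+1), (4 * ((k:ℝ) * (k:ℝ)) * (n.choose k : ℝ)) = (n:ℝ) * ((n:ℝ)+1) * 2 ^ n := by
    have := congrArg (Nat.cast (R := ℝ)) (aux_sum_2 n)
    push_cast at this
    simpa using this
  have c3 : ∑ k ∈ Finset.range (n+1), ((n.choose k : ℝ)) = (2:ℝ) ^ n := by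
    have := congrArg (Nat.cast (R := ℝ)) (Nat.sum_range_choose n)
    push_cast at this
    simpa using this
  have expand : ∀ k ∈ Finset.range (n+1),
      (n.choose k : ℝ) * (2*(k:ℝ) - (n:ℝ))^2
      = (4 * ((k:ℝ) * (k:ℝ)) * (n.choose k : ℝ)) - (n:ℝ) * (2 * (k:ℝ) * (n.choose k : ℝ))
        - (n:ℝ) * (2 * (k:ℝ) * (n.choose k : ℝ)) + (n:ℝ)^2 * (n.choose k : ℝ) := by
    intro k _; ring
  rw [Finset.sum_congr rfl expand]
  simp only [Finset.sum_add_distrib, Finset.sum_sub_distrib, ← Finset.mul_sum, c1, c2, c3]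
  ring

set_option maxHeartbeats 4000000 in
lemma aux_num (m s : ℕ) (ε r : ℝ) (hε : 0 < ε) (hε1 : ε < 1/2)
    (hm : (m : ℝ) * ε ^ 2 ≤ 1 / 8) (hm1 : 0 < m)
    (hs_def : s = Nat.sqrt (49*m/100) + 1)
    (hr_def : r = Real.sqrt m) :
    (1/10:ℝ) ≤ ((1 - (m:ℝ)*ε^2/2) * (1 - (2*(s:ℝ)-1)*ε)) * (1/2 - (m:ℝ)/(8*(s:ℝ)^2)) := by
  have hs1 : 1 ≤ s := by omega
  have hm0R : (0:ℝ) < m := by exact_mod_cast hm1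
  have hm1R : (1:ℝ) ≤ m := by exact_mod_cast hm1
  have hr0 : 0 < r := by rw [hr_def]; exact Real.sqrt_pos.mpr hm0R
  have hr2 : r^2 = m := by rw [hr_def]; exact Real.sq_sqrt (le_of_lt hm0R)
  have hm' : (r*ε)^2 ≤ 1/8 := by rw [mul_pow, hr2]; exact hm
  have hre : r * ε ≤ 0.3536 := by
    nlinarith [sq_nonneg (r*ε - 0.3536), mul_pos hr0 hε]
  have heps : ε ≤ 0.3536 := by
    nlinarith [sq_nonneg (ε - 0.3536), mul_le_mul_of_nonneg_left hm1R (sq_nonneg ε)]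
  have hsu : ((s:ℝ) - 1) ^ 2 ≤ 0.49 * m := by
    have h1 : ((Nat.sqrt (49*m/100) : ℕ) : ℝ)^2 ≤ ((49*m/100 : ℕ) : ℝ) := by
      exact_mod_cast Nat.sqrt_le' (49*m/100)
    have h2 : ((49*m/100 : ℕ) : ℝ) ≤ (49 * (m:ℝ))/100 := by
      calc ((49*m/100 : ℕ) : ℝ) ≤ ((49*m : ℕ):ℝ)/((100:ℕ):ℝ) := Nat.cast_div_le
        _ = (49*(m:ℝ))/100 := by push_cast; ring
    have h3 : ((s:ℝ) - 1) = ((Nat.sqrt (49*m/100) : ℕ) : ℝ) := by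
      rw [hs_def]; push_cast; ring
    rw [h3]; nlinarith [h1, h2]
  have hsl : 0.49 * (m:ℝ) < (s:ℝ)^2 := by
    have h4 : 49 * m < 100 * s^2 := by
      have h5 : 49*m/100 < s^2 := by rw [hs_def]; exact Nat.lt_succ_sqrt' (49*m/100)
      calc 49*m < (49*m/100 + 1) * 100 := by omega
        _ ≤ s^2 * 100 := Nat.mul_le_mul_right _ (Nat.succ_le_of_lt h5)
        _ = 100 * s^2 := by ring
    have h6 : ((49 * m : ℕ):ℝ) < ((100 * s^2 : ℕ):ℝ) := by exact_mod_cast h4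
    push_cast at h6; linarith
  have hs0R : (1:ℝ) ≤ (s:ℝ) := by exact_mod_cast hs1
  have hs10 : (0:ℝ) ≤ (s:ℝ) - 1 := by linarith
  have hsuR : (s:ℝ) - 1 ≤ 0.7 * r := by
    nlinarith [hsu, hr2, hr0, hs10]
  have hb1pos : (0:ℝ) ≤ 1 - (m:ℝ)*ε^2/2 := by nlinarith [hm]
  have hb1' : (15/16 : ℝ) ≤ 1 - (m:ℝ)*ε^2/2 := by nlinarith [hm]
  have hb2pos : (0:ℝ) ≤ 1 - (2*(s:ℝ)-1)*ε := by
    nlinarith [mul_le_mul_of_nonneg_right hsuR hε.le, hre, heps, hε.le]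
  have hs2pos : (0:ℝ) < 8*(s:ℝ)^2 := by positivity
  have hD1 : (m:ℝ)/(8*(s:ℝ)^2) ≤ 25/98 := by
    rw [div_le_iff₀ hs2pos]; nlinarith [hsl]
  rcases lt_or_ge m 16 with hsmall | hbig
  · clear hm' hre hr0 hr2 hsu hsl hsuR hb1pos hb1' hb2pos hs2pos hD1 hs0R hs10 hm0R hm1R heps hs1
    clear hr_def
    clear r
    subst hs_def
    interval_cases m <;> norm_num at hm ⊢ <;>
      nlinarith [hm, hε.le, hε1.le, sq_nonneg ε, mul_pos hε hε]
  · have hbigR : (16:ℝ) ≤ m := by exact_mod_cast hbig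
    have hr4 : (4:ℝ) ≤ r := by nlinarith [hr2, hr0]
    have heps2 : ε ≤ 0.0884 := by
      nlinarith [hre, mul_nonneg (by linarith : (0:ℝ) ≤ r - 4) hε.le]
    rcases le_or_gt (0.75*r) ((s:ℝ)) with h75 | h75
    · have hD2 : (m:ℝ)/(8*(s:ℝ)^2) ≤ 2/9 := by
        rw [div_le_iff₀ hs2pos]
        nlinarith [mul_le_mul h75 h75 (by positivity) (by positivity : (0:ℝ) ≤ (s:ℝ)), hr2]
      have hc2 : (0.4165:ℝ) ≤ 1 - (2*(s:ℝ)-1)*ε := by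
        nlinarith [mul_le_mul_of_nonneg_right hsuR hε.le, hre, heps2, hε.le]
      have h1 : (15/16 : ℝ)*(0.4165) ≤ (1 - (m:ℝ)*ε^2/2) * (1 - (2*(s:ℝ)-1)*ε) :=
        mul_le_mul hb1' hc2 (by norm_num) (by linarith)
      have h2 : ((15/16 : ℝ)*(0.4165))*(5/18) ≤
          ((1 - (m:ℝ)*ε^2/2) * (1 - (2*(s:ℝ)-1)*ε)) * (1/2 - (m:ℝ)/(8*(s:ℝ)^2)) :=
        mul_le_mul h1 (by linarith) (by norm_num) (by linarith)
      nlinarith [h2]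
    · have hc2 : (0.4696:ℝ) ≤ 1 - (2*(s:ℝ)-1)*ε := by
        nlinarith [mul_le_mul_of_nonneg_right h75.le hε.le, hre, hε.le]
      have h1 : (15/16 : ℝ)*(0.4696) ≤ (1 - (m:ℝ)*ε^2/2) * (1 - (2*(s:ℝ)-1)*ε) :=
        mul_le_mul hb1' hc2 (by norm_num) (by linarith)
      have h2 : ((15/16 : ℝ)*(0.4696))*(12/49) ≤
          ((1 - (m:ℝ)*ε^2/2) * (1 - (2*(s:ℝ)-1)*ε)) * (1/2 - (m:ℝ)/(8*(s:ℝ)^2)) :=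
        mul_le_mul h1 (by linarith) (by norm_num) (by linarith)
      nlinarith [h2]

set_option maxHeartbeats 1000000 in
lemma aux_pos (m s : ℕ) (ε r : ℝ) (hε : 0 < ε) (hε1 : ε < 1/2)
    (hm : (m : ℝ) * ε ^ 2 ≤ 1 / 8) (hm1 : 0 < m)
    (hs_def : s = Nat.sqrt (49*m/100) + 1)
    (hr_def : r = Real.sqrt m) :
    (0:ℝ) ≤ 1 - (2*(s:ℝ)-1)*ε := by
  have hs1 : 1 ≤ s := by omega
  have hm0R : (0:ℝ) < m := by exact_mod_cast hm1
  have hm1R : (1:ℝ) ≤ m := by exact_mod_cast hm1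
  have hr0 : 0 < r := by rw [hr_def]; exact Real.sqrt_pos.mpr hm0R
  have hr2 : r^2 = m := by rw [hr_def]; exact Real.sq_sqrt (le_of_lt hm0R)
  have hm' : (r*ε)^2 ≤ 1/8 := by rw [mul_pow, hr2]; exact hm
  have hre : r * ε ≤ 0.3536 := by
    nlinarith [sq_nonneg (r*ε - 0.3536), mul_pos hr0 hε]
  have heps : ε ≤ 0.3536 := by
    nlinarith [sq_nonneg (ε - 0.3536), mul_le_mul_of_nonneg_left hm1R (sq_nonneg ε)]
  have hsu : ((s:ℝ) - 1) ^ 2 ≤ 0.49 * m := by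
    have h1 : ((Nat.sqrt (49*m/100) : ℕ) : ℝ)^2 ≤ ((49*m/100 : ℕ) : ℝ) := by
      exact_mod_cast Nat.sqrt_le' (49*m/100)
    have h2 : ((49*m/100 : ℕ) : ℝ) ≤ (49 * (m:ℝ))/100 := by
      calc ((49*m/100 : ℕ) : ℝ) ≤ ((49*m : ℕ):ℝ)/((100:ℕ):ℝ) := Nat.cast_div_le
        _ = (49*(m:ℝ))/100 := by push_cast; ring
    have h3 : ((s:ℝ) - 1) = ((Nat.sqrt (49*m/100) : ℕ) : ℝ) := by
      rw [hs_def]; push_cast; ring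
    rw [h3]; nlinarith [h1, h2]
  have hs0R : (1:ℝ) ≤ (s:ℝ) := by exact_mod_cast hs1
  have hs10 : (0:ℝ) ≤ (s:ℝ) - 1 := by linarith
  have hsuR : (s:ℝ) - 1 ≤ 0.7 * r := by
    nlinarith [hsu, hr2, hr0, hs10]
  nlinarith [mul_le_mul_of_nonneg_right hsuR hε.le, hre, heps, hε.le]

set_option maxHeartbeats 2000000 in

/-- binomial anti-concentration, constant-probability form. -/
theorem stmt_3 (m : ℕ) (ε p : ℝ) (hε : 0 < ε) (hε1 : ε < 1 / 2)
    (hm : (m : ℝ) * ε ^ 2 ≤ 1 / 8) (hp : p = (1 - ε) / 2) :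
    (1 / 10 : ℝ) ≤
    ∑ k ∈ (Finset.range (m + 1)).filter (fun k => m ≤ 2 * k),
      (m.choose k : ℝ) * p ^ k * (1 - p) ^ (m - k) := by
  rcases Nat.eq_zero_or_pos m with rfl | hm1
  · norm_num
  obtain ⟨s, hs_def⟩ : ∃ s : ℕ, s = Nat.sqrt (49*m/100) + 1 := ⟨_, rfl⟩
  have hs1 : 1 ≤ s := by omega
  -- basic positivity
  have hp0 : (0:ℝ) < p := by rw [hp]; linarith
  have hq0 : (0:ℝ) < 1 - p := by rw [hp]; linarith
  -- the fair-coin half bound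
  have hchoose_nonneg : ∀ k, (0:ℝ) ≤ (m.choose k : ℝ) := fun k => Nat.cast_nonneg _
  have hsum_choose : ∑ k ∈ Finset.range (m+1), ((m.choose k : ℝ)) = 2^m := by
    have := congrArg (Nat.cast (R := ℝ)) (Nat.sum_range_choose m)
    push_cast at this; simpa using this
  have hreflA : ∑ k ∈ Finset.range (m+1), (if m ≤ 2*k then (m.choose k : ℝ) else 0)
      = ∑ k ∈ Finset.range (m+1), (if 2*k ≤ m then (m.choose k : ℝ) else 0) := by
    rw [← Finset.sum_range_reflect (fun k => if m ≤ 2*k then (m.choose k : ℝ) else 0) (m+1)]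
    apply Finset.sum_congr rfl
    intro k hk
    simp only [Finset.mem_range] at hk
    have hk' : k ≤ m := by omega
    have h1 : m + 1 - 1 - k = m - k := by omega
    rw [h1, Nat.choose_symm hk']
    have h2 : (m ≤ 2*(m-k)) ↔ (2*k ≤ m) := by omega
    simp only [h2]
  have hSA : (2:ℝ)^m ≤ 2 * ∑ k ∈ Finset.range (m+1), (if m ≤ 2*k then (m.choose k : ℝ) else 0) := by
    have hpt : ∀ k ∈ Finset.range (m+1), (m.choose k : ℝ) ≤
        (if m ≤ 2*k then (m.choose k : ℝ) else 0) + (if 2*k ≤ m then (m.choose k : ℝ) else 0) := by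
      intro k _
      have hC := hchoose_nonneg k
      split_ifs with h1 h2 <;> first | linarith | omega
    calc (2:ℝ)^m = ∑ k ∈ Finset.range (m+1), ((m.choose k : ℝ)) := hsum_choose.symm
      _ ≤ ∑ k ∈ Finset.range (m+1), ((if m ≤ 2*k then (m.choose k : ℝ) else 0) + (if 2*k ≤ m then (m.choose k : ℝ) else 0)) := Finset.sum_le_sum hpt
      _ = 2 * ∑ k ∈ Finset.range (m+1), (if m ≤ 2*k then (m.choose k : ℝ) else 0) := by
          rw [Finset.sum_add_distrib, ← hreflA]; ring
  -- tail bound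
  have hreflU : ∑ k ∈ Finset.range (m+1), (if m + 2*s ≤ 2*k then (m.choose k : ℝ) else 0)
      = ∑ k ∈ Finset.range (m+1), (if 2*k + 2*s ≤ m then (m.choose k : ℝ) else 0) := by
    rw [← Finset.sum_range_reflect (fun k => if m + 2*s ≤ 2*k then (m.choose k : ℝ) else 0) (m+1)]
    apply Finset.sum_congr rfl
    intro k hk
    simp only [Finset.mem_range] at hk
    have hk' : k ≤ m := by omega
    have h1 : m + 1 - 1 - k = m - k := by omega
    rw [h1, Nat.choose_symm hk']
    have h2 : (m + 2*s ≤ 2*(m-k)) ↔ (2*k + 2*s ≤ m) := by omega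
    simp only [h2]
  have hSU : 8*(s:ℝ)^2 * ∑ k ∈ Finset.range (m+1), (if m + 2*s ≤ 2*k then (m.choose k : ℝ) else 0)
      ≤ (m:ℝ) * 2^m := by
    have hpt : ∀ k ∈ Finset.range (m+1),
        4*(s:ℝ)^2 * ((if m + 2*s ≤ 2*k then (m.choose k : ℝ) else 0)
          + (if 2*k + 2*s ≤ m then (m.choose k : ℝ) else 0))
        ≤ (m.choose k : ℝ) * (2*(k:ℝ) - (m:ℝ))^2 := by
      intro k hk
      simp only [Finset.mem_range] at hk
      have hC := hchoose_nonneg k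
      split_ifs with h1 h2 h3
      · omega
      · -- upper tail : 2s <= 2k - m
        have hcast : (m:ℝ) + 2*(s:ℝ) ≤ 2*(k:ℝ) := by exact_mod_cast h1
        have hs0 : (0:ℝ) ≤ (s:ℝ) := Nat.cast_nonneg _
        have key : 4*(s:ℝ)^2 ≤ (2*(k:ℝ) - (m:ℝ))^2 := by
          nlinarith [mul_nonneg (by linarith : (0:ℝ) ≤ 2*(k:ℝ) - (m:ℝ) - 2*(s:ℝ))
            (by linarith : (0:ℝ) ≤ 2*(k:ℝ) - (m:ℝ) + 2*(s:ℝ))]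
        nlinarith [mul_le_mul_of_nonneg_left key hC]
      · -- lower tail
        have hcast : 2*(k:ℝ) + 2*(s:ℝ) ≤ (m:ℝ) := by exact_mod_cast h3
        have hs0 : (0:ℝ) ≤ (s:ℝ) := Nat.cast_nonneg _
        have key : 4*(s:ℝ)^2 ≤ (2*(k:ℝ) - (m:ℝ))^2 := by
          nlinarith [mul_nonneg (by linarith : (0:ℝ) ≤ (m:ℝ) - 2*(k:ℝ) - 2*(s:ℝ))
            (by linarith : (0:ℝ) ≤ (m:ℝ) - 2*(k:ℝ) + 2*(s:ℝ))]
        nlinarith [mul_le_mul_of_nonneg_left key hC]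
      · have := mul_nonneg hC (sq_nonneg (2*(k:ℝ) - (m:ℝ)))
        simpa using this
    calc 8*(s:ℝ)^2 * ∑ k ∈ Finset.range (m+1), (if m + 2*s ≤ 2*k then (m.choose k : ℝ) else 0)
        = ∑ k ∈ Finset.range (m+1), 4*(s:ℝ)^2 * ((if m + 2*s ≤ 2*k then (m.choose k : ℝ) else 0)
            + (if 2*k + 2*s ≤ m then (m.choose k : ℝ) else 0)) := by
          rw [Finset.sum_congr rfl (fun k _ => mul_add (4*(s:ℝ)^2) _ _), Finset.sum_add_distrib,
            ← Finset.mul_sum, ← Finset.mul_sum, ← hreflU]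
          ring
      _ ≤ ∑ k ∈ Finset.range (m+1), (m.choose k : ℝ) * (2*(k:ℝ) - (m:ℝ))^2 := Finset.sum_le_sum hpt
      _ = (m:ℝ) * 2^m := aux_var m

  have hb1pos : (0:ℝ) ≤ 1 - (m:ℝ)*ε^2/2 := by nlinarith [hm]
  have hb2pos : (0:ℝ) ≤ 1 - (2*(s:ℝ)-1)*ε :=
    aux_pos m s ε (Real.sqrt m) hε hε1 hm hm1 hs_def rfl
  have hs2pos : (0:ℝ) < 8*(s:ℝ)^2 := by
    have hs0R : (1:ℝ) ≤ (s:ℝ) := by exact_mod_cast (by omega : 1 ≤ s)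
    positivity
  -- pointwise comparison with the fair coin
  have hpoint : ∀ k ∈ Finset.range (m+1),
      ((1 - (m:ℝ)*ε^2/2) * (1 - (2*(s:ℝ)-1)*ε)) * (1/2:ℝ)^m *
        ((if m ≤ 2*k then (m.choose k : ℝ) else 0) - (if m + 2*s ≤ 2*k then (m.choose k : ℝ) else 0))
      ≤ (if m ≤ 2*k then (m.choose k : ℝ) * p^k * (1-p)^(m-k) else 0) := by
    intro k hk
    simp only [Finset.mem_range] at hk
    have hk' : k ≤ m := by omega
    have hC := hchoose_nonneg k
    split_ifs with h1 h2 h3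
    · rw [sub_self, mul_zero]
      positivity
    · rw [sub_zero]
      have hq : 1 - p = (1+ε)/2 := by rw [hp]; ring
      have e3 : (2:ℝ)^k * 2^(m-k) = 2^m := by
        rw [← pow_add]; congr 1; omega
      have e2 : (1-ε)^k = (1-ε)^(m-k) * (1-ε)^(2*k-m) := by
        rw [← pow_add]; congr 1; omega
      have e4 : (1-ε)^(m-k) * (1+ε)^(m-k) = (1-ε^2)^(m-k) := by
        rw [← mul_pow]; congr 1; ring
      have e1 : p^k * (1-p)^(m-k) = (1/2:ℝ)^m * ((1-ε^2)^(m-k) * (1-ε)^(2*k-m)) := by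
        calc p^k * (1-p)^(m-k) = ((1-ε)^k * (1+ε)^(m-k)) / (2^k * 2^(m-k)) := by
              rw [hq, hp, div_pow, div_pow, div_mul_div_comm]
          _ = ((1-ε^2)^(m-k) * (1-ε)^(2*k-m)) / 2^m := by
              rw [e3, e2, ← e4]; ring
          _ = (1/2:ℝ)^m * ((1-ε^2)^(m-k) * (1-ε)^(2*k-m)) := by
              rw [one_div, inv_pow]; ring
      have hb1 : 1 - (m:ℝ)*ε^2/2 ≤ (1-ε^2)^(m-k) := by
        have h5 := one_add_mul_le_pow (show (-2:ℝ) ≤ -ε^2 by nlinarith) (m-k)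
        have h6 : ((m-k:ℕ):ℝ) ≤ (m:ℝ)/2 := by
          have h7 : ((2*(m-k) : ℕ):ℝ) ≤ ((m:ℕ):ℝ) := by
            exact_mod_cast Nat.cast_le.mpr (by omega : 2*(m-k) ≤ m)
          push_cast at h7; linarith
        calc 1 - (m:ℝ)*ε^2/2 ≤ 1 + ((m-k:ℕ):ℝ)*(-ε^2) := by nlinarith [sq_nonneg ε]
          _ ≤ (1 + -ε^2)^(m-k) := h5
          _ = (1-ε^2)^(m-k) := by rw [show (1:ℝ) + -ε^2 = 1 - ε^2 by ring]
      have hb2 : 1 - (2*(s:ℝ)-1)*ε ≤ (1-ε)^(2*k-m) := by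
        have h5 := one_add_mul_le_pow (show (-2:ℝ) ≤ -ε by linarith) (2*k-m)
        have h6 : ((2*k-m:ℕ):ℝ) ≤ 2*(s:ℝ)-1 := by
          have hnat : 2*k-m ≤ 2*s-1 := by omega
          have h7 : ((2*k-m:ℕ):ℝ) ≤ ((2*s-1:ℕ):ℝ) := by exact_mod_cast hnat
          have h8 : ((2*s-1:ℕ):ℝ) = 2*(s:ℝ)-1 := by
            have : (1:ℕ) ≤ 2*s := by omega
            push_cast [this]
            ring
          linarith [h8 ▸ h7]
        calc 1 - (2*(s:ℝ)-1)*ε ≤ 1 + ((2*k-m:ℕ):ℝ)*(-ε) := by nlinarith [hε.le]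
          _ ≤ (1 + -ε)^(2*k-m) := h5
          _ = (1-ε)^(2*k-m) := by rw [show (1:ℝ) + -ε = 1 - ε by ring]
      have hb1nn : (0:ℝ) ≤ (1-ε^2)^(m-k) := pow_nonneg (by nlinarith) _
      have hfac : (1 - (m:ℝ)*ε^2/2) * (1 - (2*(s:ℝ)-1)*ε) ≤ (1-ε^2)^(m-k) * (1-ε)^(2*k-m) :=
        mul_le_mul hb1 hb2 hb2pos hb1nn
      have h2m : (0:ℝ) ≤ (1/2:ℝ)^m := by positivity
      calc (1 - (m:ℝ)*ε^2/2) * (1 - (2*(s:ℝ)-1)*ε) * (1/2:ℝ)^m * (m.choose k:ℝ)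
          ≤ ((1-ε^2)^(m-k) * (1-ε)^(2*k-m)) * (1/2:ℝ)^m * (m.choose k:ℝ) :=
            mul_le_mul_of_nonneg_right (mul_le_mul_of_nonneg_right hfac h2m) hC
        _ = (m.choose k:ℝ) * p^k * (1-p)^(m-k) := by
            rw [mul_assoc ((m.choose k:ℝ)) _ _, e1]; ring
    · omega
    · rw [sub_self, mul_zero]
  -- assemble
  have hpow : ((1/2:ℝ))^m * 2^m = 1 := by rw [← mul_pow]; norm_num
  have hfinal1 : ((1 - (m:ℝ)*ε^2/2) * (1 - (2*(s:ℝ)-1)*ε)) * (1/2 - (m:ℝ)/(8*(s:ℝ)^2)) ≤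
      ∑ k ∈ Finset.range (m+1), (if m ≤ 2*k then (m.choose k : ℝ) * p^k * (1-p)^(m-k) else 0) := by
    have hsum := Finset.sum_le_sum hpoint
    rw [← Finset.mul_sum, Finset.sum_sub_distrib] at hsum
    have hSU' : ∑ k ∈ Finset.range (m+1), (if m + 2*s ≤ 2*k then (m.choose k : ℝ) else 0)
        ≤ 2^m * ((m:ℝ)/(8*(s:ℝ)^2)) := by
      rw [← mul_le_mul_iff_of_pos_right hs2pos]
      have hD : (m:ℝ)/(8*(s:ℝ)^2) * (8*(s:ℝ)^2) = m := div_mul_cancel₀ _ (ne_of_gt hs2pos)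
      calc (∑ k ∈ Finset.range (m+1), (if m + 2*s ≤ 2*k then (m.choose k : ℝ) else 0)) * (8*(s:ℝ)^2)
          ≤ (m:ℝ) * 2^m := by rw [mul_comm]; exact hSU
        _ = 2^m * ((m:ℝ)/(8*(s:ℝ)^2)) * (8*(s:ℝ)^2) := by rw [mul_assoc, hD]; ring
    have hdiff : (2:ℝ)^m * (1/2 - (m:ℝ)/(8*(s:ℝ)^2)) ≤
        ∑ k ∈ Finset.range (m+1), (if m ≤ 2*k then (m.choose k : ℝ) else 0) -
        ∑ k ∈ Finset.range (m+1), (if m + 2*s ≤ 2*k then (m.choose k : ℝ) else 0) := by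
      have h9 : (2:ℝ)^m * (1/2 - (m:ℝ)/(8*(s:ℝ)^2)) = 2^m * (1/2:ℝ) - 2^m * ((m:ℝ)/(8*(s:ℝ)^2)) := by ring
      rw [h9]; nlinarith [hSA, hSU']
    calc ((1 - (m:ℝ)*ε^2/2) * (1 - (2*(s:ℝ)-1)*ε)) * (1/2 - (m:ℝ)/(8*(s:ℝ)^2))
        = (((1 - (m:ℝ)*ε^2/2) * (1 - (2*(s:ℝ)-1)*ε)) * (1/2:ℝ)^m) * ((2:ℝ)^m * (1/2 - (m:ℝ)/(8*(s:ℝ)^2))) := by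
          have : ((1 - (m:ℝ)*ε^2/2) * (1 - (2*(s:ℝ)-1)*ε)) * ((1/2:ℝ)^m * 2^m) * (1/2 - (m:ℝ)/(8*(s:ℝ)^2)) = (((1 - (m:ℝ)*ε^2/2) * (1 - (2*(s:ℝ)-1)*ε)) * (1/2:ℝ)^m) * ((2:ℝ)^m * (1/2 - (m:ℝ)/(8*(s:ℝ)^2))) := by ring
          rw [← this, hpow, mul_one]
      _ ≤ (((1 - (m:ℝ)*ε^2/2) * (1 - (2*(s:ℝ)-1)*ε)) * (1/2:ℝ)^m) *
          (∑ k ∈ Finset.range (m+1), (if m ≤ 2*k then (m.choose k : ℝ) else 0) -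
            ∑ k ∈ Finset.range (m+1), (if m + 2*s ≤ 2*k then (m.choose k : ℝ) else 0)) := by
          apply mul_le_mul_of_nonneg_left hdiff
          positivity
      _ ≤ _ := hsum
  -- final numeric bound
  have hnum : (1/10:ℝ) ≤ ((1 - (m:ℝ)*ε^2/2) * (1 - (2*(s:ℝ)-1)*ε)) * (1/2 - (m:ℝ)/(8*(s:ℝ)^2)) :=
    aux_num m s ε (Real.sqrt m) hε hε1 hm hm1 hs_def rfl
  rw [Finset.sum_filter]
  exact le_trans hnum hfinal1
end

section
/- Let H be a set of functions X → Bool, P_X a probability measure on X, and suppose (H, d) is totally bounded where d(h,g) := P_X{x : h(x) ≠ g(x)}. Let er : H → [0,1] be 1-Lipschitz with respect to d (i.e. |er(h) − er(g)| ≤ d(h,g)). If inf{ er(h) − m : h ∈ H, er(h) > m } = 0, where m := inf_{h ∈ H} er(h), then there exists a function h* : X → Bool such that inf_{h ∈ H, d'(h,h*) > 0} d'(h, h*) = 0 where d'(h,h*) := P_X{x : h(x) ≠ h*(x)}, and er extends continuously to h* with value m. -/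
open MeasureTheory

/-- A set is "good" if it sits in `H` and contains classifiers with error
arbitrarily close to (and above) `m`. -/
def stmt8Good {X : Type*} (H : Set (X → Bool)) (er : (X → Bool) → ℝ) (m : ℝ)
    (S : Set (X → Bool)) : Prop :=
  S ⊆ H ∧ ∀ δ : ℝ, 0 < δ → ∃ h ∈ S, m < er h ∧ er h < m + δ

/-- Pigeonhole step: a good set has a good subset of small diameter. -/
lemma stmt8_step {X : Type*} {H : Set (X → Bool)} {d : (X → Bool) → (X → Bool) → ℝ}
    {er : (X → Bool) → ℝ} {m : ℝ}
    (htb : ∀ ε : ℝ, 0 < ε → ∃ F : Finset (X → Bool), ∀ h ∈ H, ∃ g ∈ F, d h g ≤ ε)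
    {S : Set (X → Bool)} (hS : stmt8Good H er m S) {ε : ℝ} (hε : 0 < ε) :
    ∃ g : X → Bool, stmt8Good H er m {h ∈ S | d h g ≤ ε} := by
  classical
  obtain ⟨F, hF⟩ := htb ε hε
  by_contra hc
  push_neg at hc
  have hc' : ∀ g : X → Bool, ∃ δ : ℝ, 0 < δ ∧
      ∀ h ∈ S, d h g ≤ ε → ¬(m < er h ∧ er h < m + δ) := by
    intro g
    have := hc g
    rw [stmt8Good] at this
    push_neg at this
    rcases this ((Set.sep_subset _ _).trans hS.1) with ⟨δ, hδ, hδ'⟩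
    exact ⟨δ, hδ, fun h hhS hdg hbad => absurd (hδ' h ⟨hhS, hdg⟩ hbad.1) (not_le.mpr hbad.2)⟩
  choose δf hδfpos hδfprop using hc'
  obtain ⟨h0, hh0S, _⟩ := hS.2 1 one_pos
  obtain ⟨g0, hg0F, _⟩ := hF h0 (hS.1 hh0S)
  have hFne : (F.image δf).Nonempty := ⟨δf g0, Finset.mem_image_of_mem _ hg0F⟩
  set δ := (F.image δf).min' hFne with hδdef
  have hδpos : 0 < δ := by
    obtain ⟨g, hg, hgeq⟩ := Finset.mem_image.mp ((F.image δf).min'_mem hFne)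
    rw [hδdef, ← hgeq]; exact hδfpos g
  obtain ⟨h, hhS, hm1, hm2⟩ := hS.2 δ hδpos
  obtain ⟨g, hgF, hdg⟩ := hF h (hS.1 hhS)
  have hle : δ ≤ δf g := Finset.min'_le _ _ (Finset.mem_image_of_mem _ hgF)
  exact hδfprop g h hhS hdg ⟨hm1, hm2.trans_le (by linarith)⟩

/-- A recursively chosen chain of good sets of shrinking diameter. -/
noncomputable def stmt8Chain {X : Type*} (H : Set (X → Bool)) (d : (X → Bool) → (X → Bool) → ℝ)
    (er : (X → Bool) → ℝ) (m : ℝ)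
    (htb : ∀ ε : ℝ, 0 < ε → ∃ F : Finset (X → Bool), ∀ h ∈ H, ∃ g ∈ F, d h g ≤ ε)
    (h0 : stmt8Good H er m {h ∈ H | m < er h}) :
    ℕ → {S : Set (X → Bool) // stmt8Good H er m S}
  | 0 => ⟨{h ∈ H | m < er h}, h0⟩
  | n + 1 =>
    ⟨_, Classical.choose_spec
      (stmt8_step htb (stmt8Chain H d er m htb h0 n).2
        (pow_pos (by norm_num : (0:ℝ) < 1/2) n))⟩

lemma stmt8Chain_succ_subset {X : Type*} (H : Set (X → Bool)) (d : (X → Bool) → (X → Bool) → ℝ)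
    (er : (X → Bool) → ℝ) (m : ℝ)
    (htb : ∀ ε : ℝ, 0 < ε → ∃ F : Finset (X → Bool), ∀ h ∈ H, ∃ g ∈ F, d h g ≤ ε)
    (h0 : stmt8Good H er m {h ∈ H | m < er h}) (n : ℕ) :
    (stmt8Chain H d er m htb h0 (n+1)).1 ⊆ (stmt8Chain H d er m htb h0 n).1 := by
  intro h hh
  exact hh.1

lemma stmt8Chain_diam {X : Type*} (H : Set (X → Bool)) (d : (X → Bool) → (X → Bool) → ℝ)
    (er : (X → Bool) → ℝ) (m : ℝ)
    (htb : ∀ ε : ℝ, 0 < ε → ∃ F : Finset (X → Bool), ∀ h ∈ H, ∃ g ∈ F, d h g ≤ ε)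
    (h0 : stmt8Good H er m {h ∈ H | m < er h})
    (dsymm : ∀ h g, d h g = d g h) (dtri : ∀ h g k, d h g ≤ d h k + d k g) (n : ℕ)
    {h h' : X → Bool} (hh : h ∈ (stmt8Chain H d er m htb h0 (n+1)).1)
    (hh' : h' ∈ (stmt8Chain H d er m htb h0 (n+1)).1) :
    d h h' ≤ 2 * (1/2 : ℝ)^n := by
  have key : ∀ (g : X → Bool) (e : ℝ), d h g ≤ e → d h' g ≤ e → d h h' ≤ 2 * e := by
    intro g e a b
    have t := dtri h h' g
    rw [dsymm g h'] at t
    linarith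
  exact key _ _ hh.2 hh'.2


/-- failure of the gap condition yields a limiting target function. -/
theorem stmt_8 {X : Type*} [MeasurableSpace X] (PX : Measure X) [IsProbabilityMeasure PX]
    (H : Set (X → Bool)) (d : (X → Bool) → (X → Bool) → ℝ)
    (hd : ∀ h g, d h g = (PX {x | h x ≠ g x}).toReal)
    (htb : ∀ ε : ℝ, 0 < ε → ∃ F : Finset (X → Bool), ∀ h ∈ H, ∃ g ∈ F, d h g ≤ ε)
    (er : (X → Bool) → ℝ) (her01 : ∀ h ∈ H, er h ∈ Set.Icc (0 : ℝ) 1)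
    (hlip : ∀ h ∈ H, ∀ g ∈ H, |er h - er g| ≤ d h g)
    (m : ℝ) (hm : IsGLB (er '' H) m)
    (hfail : ∀ δ : ℝ, 0 < δ → ∃ h ∈ H, m < er h ∧ er h < m + δ) :
    ∃ hstar : X → Bool,
      (∀ δ : ℝ, 0 < δ → ∃ h ∈ H, 0 < d h hstar ∧ d h hstar < δ) ∧
      (∀ δ : ℝ, 0 < δ → ∃ h ∈ H, d h hstar < δ ∧ |er h - m| < δ) := by
  classical
  have dnn : ∀ h g, 0 ≤ d h g := fun h g => by rw [hd]; exact ENNReal.toReal_nonneg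
  have dsymm : ∀ h g, d h g = d g h := by
    intro h g
    rw [hd, hd]
    congr 2
    ext x
    simp [ne_comm]
  have dtri : ∀ h g k, d h g ≤ d h k + d k g := by
    intro h g k
    have hsub : {x | h x ≠ g x} ⊆ {x | h x ≠ k x} ∪ {x | k x ≠ g x} := by
      intro x hx
      simp only [Set.mem_union, Set.mem_setOf_eq]
      by_contra hc
      push_neg at hc
      exact hx (hc.1.trans hc.2)
    have hmeas : PX {x | h x ≠ g x} ≤ PX {x | h x ≠ k x} + PX {x | k x ≠ g x} :=
      (measure_mono hsub).trans (measure_union_le _ _)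
    have hne : PX {x | h x ≠ k x} + PX {x | k x ≠ g x} ≠ ⊤ :=
      ENNReal.add_ne_top.mpr ⟨measure_ne_top _ _, measure_ne_top _ _⟩
    rw [hd, hd, hd]
    calc (PX {x | h x ≠ g x}).toReal
        ≤ (PX {x | h x ≠ k x} + PX {x | k x ≠ g x}).toReal := ENNReal.toReal_mono hne hmeas
      _ = _ := ENNReal.toReal_add (measure_ne_top _ _) (measure_ne_top _ _)
  have dofReal : ∀ (h g : X → Bool) (c : ℝ), d h g ≤ c →
      PX {x | h x ≠ g x} ≤ ENNReal.ofReal c := by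
    intro h g c hc
    rw [hd] at hc
    rw [← ENNReal.ofReal_toReal (measure_ne_top PX {x | h x ≠ g x})]
    exact ENNReal.ofReal_le_ofReal hc
  have h0good : stmt8Good H er m {h ∈ H | m < er h} := by
    refine ⟨Set.sep_subset _ _, fun δ hδ => ?_⟩
    obtain ⟨h, hH, h1, h2⟩ := hfail δ hδ
    exact ⟨h, ⟨hH, h1⟩, h1, h2⟩
  set C := stmt8Chain H d er m htb h0good with hC
  have hCsub : ∀ n, (C n).1 ⊆ H := fun n => (C n).2.1
  have hCanti : ∀ i j, i ≤ j → (C j).1 ⊆ (C i).1 := by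
    intro i j hij
    induction hij with
    | refl => exact fun _ h => h
    | @step j hj ih => exact (stmt8Chain_succ_subset H d er m htb h0good j).trans ih
  have hεpos : ∀ n : ℕ, (0:ℝ) < (1/2)^n := fun n => pow_pos (by norm_num) n
  choose hs hsmem hsm1 hsm2 using fun n => (C (n+1)).2.2 ((1/2)^n) (hεpos n)
  have hsH : ∀ n, hs n ∈ H := fun n => hCsub _ (hsmem n)
  have hstep : ∀ n, d (hs n) (hs (n+1)) ≤ 2*(1/2:ℝ)^n := fun n =>
    stmt8Chain_diam H d er m htb h0good dsymm dtri n (hsmem n)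
      (hCanti (n+1) (n+2) (by omega) (hsmem (n+1)))
  set hstar : X → Bool := fun x => decide (∀ᶠ n in Filter.atTop, hs n x = true) with hstardef
  have hdist : ∀ k, d (hs k) hstar ≤ 4*(1/2:ℝ)^k := by
    intro k
    have hsub : {x | hs k x ≠ hstar x} ⊆ ⋃ j : ℕ, {x | hs (k+j) x ≠ hs (k+j+1) x} := by
      intro x hx
      by_contra hc
      simp only [Set.mem_iUnion, Set.mem_setOf_eq, not_exists, not_not] at hc
      have hall : ∀ j, hs (k+j) x = hs k x := by
        intro j
        induction j with
        | zero => rfl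
        | succ j ih =>
          show hs (k+j+1) x = hs k x
          rw [← hc j]
          exact ih
      have hge : ∀ n, k ≤ n → hs n x = hs k x := by
        intro n hn
        obtain ⟨j, rfl⟩ := Nat.exists_eq_add_of_le hn
        exact hall j
      have heq : hstar x = hs k x := by
        cases hkx : hs k x with
        | true =>
          have hev : ∀ᶠ n in Filter.atTop, hs n x = true :=
            Filter.eventually_atTop.mpr ⟨k, fun n hn => (hge n hn).trans hkx⟩
          exact decide_eq_true hev
        | false =>
          have hnev : ¬ ∀ᶠ n in Filter.atTop, hs n x = true := by
            intro hev
            obtain ⟨N, hN⟩ := Filter.eventually_atTop.mp hev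
            have h1 := hN (max N k) (le_max_left _ _)
            rw [hge _ (le_max_right _ _), hkx] at h1
            exact Bool.false_ne_true h1
          exact decide_eq_false hnev
      exact hx heq.symm
    have hsummable : Summable (fun j : ℕ => 2*(1/2:ℝ)^(k+j)) := by
      simp_rw [pow_add]
      exact ((summable_geometric_of_lt_one (by norm_num) (by norm_num)).mul_left _).mul_left _
    have hsum : PX {x | hs k x ≠ hstar x} ≤ ENNReal.ofReal (4*(1/2:ℝ)^k) := by
      calc PX {x | hs k x ≠ hstar x}
          ≤ ∑' j : ℕ, PX {x | hs (k+j) x ≠ hs (k+j+1) x} :=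
            (measure_mono hsub).trans (measure_iUnion_le _)
        _ ≤ ∑' j : ℕ, ENNReal.ofReal (2*(1/2:ℝ)^(k+j)) :=
            ENNReal.tsum_le_tsum fun j => dofReal _ _ _ (hstep (k+j))
        _ = ENNReal.ofReal (∑' j : ℕ, 2*(1/2:ℝ)^(k+j)) :=
            (ENNReal.ofReal_tsum_of_nonneg (fun j => by positivity) hsummable).symm
        _ = ENNReal.ofReal (4*(1/2:ℝ)^k) := by
            congr 1
            have harr : ∑' j : ℕ, 2*(1/2:ℝ)^(k+j) = (2*(1/2:ℝ)^k) * ∑' j : ℕ, (1/2:ℝ)^j := by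
              rw [← tsum_mul_left]
              congr 1
              ext j
              rw [pow_add]
              ring
            rw [harr, tsum_geometric_of_lt_one (by norm_num) (by norm_num)]
            norm_num
            ring
    rw [hd]
    calc (PX {x | hs k x ≠ hstar x}).toReal
        ≤ (ENNReal.ofReal (4*(1/2:ℝ)^k)).toReal :=
          ENNReal.toReal_mono ENNReal.ofReal_ne_top hsum
      _ = 4*(1/2:ℝ)^k := ENNReal.toReal_ofReal (by positivity)
  have hpos : ∀ k, 0 < d (hs k) hstar := by
    intro k
    rcases (dnn (hs k) hstar).lt_or_eq with hlt | heq
    · exact hlt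
    · exfalso
      obtain ⟨n, hn⟩ := exists_pow_lt_of_lt_one
        (show (0:ℝ) < (er (hs k) - m)/5 by linarith [hsm1 k]) (by norm_num : (1/2:ℝ) < 1)
      have t1 : |er (hs k) - er (hs n)| ≤ d (hs k) (hs n) := hlip _ (hsH k) _ (hsH n)
      have t2 : d (hs k) (hs n) ≤ d (hs k) hstar + d (hs n) hstar := by
        have t := dtri (hs k) (hs n) hstar
        rw [dsymm hstar (hs n)] at t
        exact t
      have habs : er (hs k) - er (hs n) ≤ |er (hs k) - er (hs n)| := le_abs_self _
      have t3 := hdist n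
      have t4 := hsm2 n
      have t5 := hsm1 n
      linarith
  refine ⟨hstar, ?_, ?_⟩
  · intro δ hδ
    obtain ⟨k, hk⟩ := exists_pow_lt_of_lt_one
      (show (0:ℝ) < δ/4 by linarith) (by norm_num : (1/2:ℝ) < 1)
    exact ⟨hs k, hsH k, hpos k, lt_of_le_of_lt (hdist k) (by linarith)⟩
  · intro δ hδ
    obtain ⟨k, hk⟩ := exists_pow_lt_of_lt_one
      (show (0:ℝ) < δ/4 by linarith) (by norm_num : (1/2:ℝ) < 1)
    refine ⟨hs k, hsH k, lt_of_le_of_lt (hdist k) (by linarith), ?_⟩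
    rw [abs_of_pos (by linarith [hsm1 k])]
    have := hsm2 k
    have hεk := hεpos k
    linarith
end

section
/- Let H be a class of functions X → Bool, P_X a probability measure on X, and define the pseudometric d(h,g) = P_X{x : h(x) ≠ g(x)}. Suppose H is totally bounded under d. For ε > 0 let H(ε) ⊆ H be a family of subsets indexed by ε, nonincreasing in ε (H(ε) ⊆ H(ε') for ε ≤ ε'), and define σ²_ε := sup_{h ∈ H(ε)} lim_{τ→0} inf_{g ∈ H(τ)} d(h,g). Assume each H(ε) is nonempty for ε > 0. Then lim_{ε→0} σ²_ε = 0. -/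
/-- `σ²_ε → 0` as `ε → 0` for totally bounded classes.
Here the inner limit as `τ → 0⁺` of the nondecreasing quantity
`inf_{g ∈ H(τ)} d(h,g)` is expressed as a supremum over `τ > 0`. -/
theorem stmt_13 {H : Type*} [PseudoMetricSpace H]
    (htb : TotallyBounded (Set.univ : Set H))
    (Hε : ℝ → Set H)
    (hmono : ∀ ε ε' : ℝ, ε ≤ ε' → Hε ε ⊆ Hε ε')
    (hne : ∀ ε : ℝ, 0 < ε → (Hε ε).Nonempty)
    (σ : ℝ → ℝ)
    (hσ : ∀ ε, σ ε = sSup ((fun h => sSup ((fun τ => sInf ((fun g => dist h g) '' (Hε τ))) '' (Set.Ioi (0 : ℝ)))) '' (Hε ε))) :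
    Filter.Tendsto σ (nhdsWithin 0 (Set.Ioi 0)) (nhds 0) := by
  -- notation
  set F : H → ℝ := fun h => sSup ((fun τ => sInf ((fun g => dist h g) '' (Hε τ))) '' (Set.Ioi (0 : ℝ))) with hF
  -- every inner double-inf is nonnegative
  have hinf_nonneg : ∀ (h : H) (τ : ℝ), 0 ≤ sInf ((fun g => dist h g) '' (Hε τ)) := fun h τ =>
    Real.sInf_nonneg (by rintro _ ⟨g, _, rfl⟩; exact dist_nonneg)
  have hF_nonneg : ∀ h, 0 ≤ F h := fun h =>
    Real.sSup_nonneg (by rintro _ ⟨τ, _, rfl⟩; exact hinf_nonneg h τ)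
  have hσ_nonneg : ∀ ε, 0 ≤ σ ε := by
    intro ε
    rw [hσ]
    exact Real.sSup_nonneg (by rintro _ ⟨h, _, rfl⟩; exact hF_nonneg h)
  rw [Metric.tendsto_nhdsWithin_nhds]
  intro δ hδ
  by_contra hcon
  push_neg at hcon
  -- For each n, find εₙ < 1/(n+1) with σ εₙ ≥ δ, and hₙ ∈ Hε (1/(n+1)) with F hₙ > δ/2.
  have key : ∀ n : ℕ, ∃ h : H, h ∈ Hε (1 / ((n : ℝ) + 1)) ∧ δ / 2 < F h := by
    intro n
    have hpos : (0 : ℝ) < 1 / ((n : ℝ) + 1) := by positivity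
    obtain ⟨ε, hε0', hd, hσd⟩ := hcon (1 / ((n : ℝ) + 1)) hpos
    have hεsmall : ε < 1 / ((n : ℝ) + 1) := by
      rwa [Real.dist_eq, sub_zero, abs_of_pos hε0'] at hd
    have hσδ : δ ≤ σ ε := by
      rw [Real.dist_eq, sub_zero, abs_of_nonneg (hσ_nonneg ε)] at hσd
      linarith
    -- extract a witness h with inner sup > δ/2
    by_contra hno
    push_neg at hno
    have : σ ε ≤ δ / 2 := by
      rw [hσ]
      refine Real.sSup_le ?_ (by linarith)
      rintro _ ⟨h, hh, rfl⟩
      exact hno h (hmono ε _ hεsmall.le hh)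
    linarith
  choose hseq hmem hbig using key
  -- totally bounded: finite δ/8-net
  obtain ⟨t, htf, htcov⟩ := Metric.totallyBounded_iff.mp htb (δ / 8) (by linarith)
  -- pigeonhole: some center has infinitely many hₙ nearby
  have hnear : ∀ n : ℕ, ∃ y : t, dist (hseq n) (y : H) < δ / 8 := by
    intro n
    have : hseq n ∈ ⋃ y ∈ t, Metric.ball y (δ / 8) := htcov (Set.mem_univ _)
    obtain ⟨y, hy, hball⟩ := Set.mem_iUnion₂.mp this
    exact ⟨⟨y, hy⟩, hball⟩
  choose f hf using hnear
  haveI : Finite t := htf.to_subtype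
  obtain ⟨y, hy⟩ := Finite.exists_infinite_fiber f
  have hSinf : (f ⁻¹' {y}).Infinite := Set.infinite_coe_iff.mp hy
  obtain ⟨N, hN⟩ := hSinf.nonempty
  -- all members of the fiber are within δ/4 of h_N
  have hclose : ∀ m ∈ f ⁻¹' {y}, dist (hseq N) (hseq m) < δ / 4 := by
    intro m hm
    have h1 : dist (hseq N) (y : H) < δ / 8 := by
      have := hf N; rwa [hN] at this
    have h2 : dist (hseq m) (y : H) < δ / 8 := by
      have := hf m; rwa [hm] at this
    calc dist (hseq N) (hseq m) ≤ dist (hseq N) (y : H) + dist (hseq m) (y : H) :=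
          dist_triangle_right _ _ _
      _ < δ / 8 + δ / 8 := by linarith
      _ = δ / 4 := by ring
  -- hence F (hseq N) ≤ δ/4, contradicting F (hseq N) > δ/2
  have hFle : F (hseq N) ≤ δ / 4 := by
    refine Real.sSup_le ?_ (by linarith)
    rintro _ ⟨τ, hτ, rfl⟩
    show sInf ((fun g => dist (hseq N) g) '' Hε τ) ≤ δ / 4
    -- pick m in the fiber with 1/(m+1) ≤ τ
    obtain ⟨n, hn⟩ := exists_nat_one_div_lt (Set.mem_Ioi.mp hτ)
    obtain ⟨m, hmS, hmn⟩ := hSinf.exists_gt n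
    have hmem' : hseq m ∈ Hε τ := by
      refine hmono _ τ ?_ (hmem m)
      have : (1 : ℝ) / ((m : ℝ) + 1) ≤ 1 / ((n : ℝ) + 1) := by
        apply one_div_le_one_div_of_le (by positivity)
        have : (n : ℝ) ≤ (m : ℝ) := Nat.cast_le.mpr hmn.le
        linarith
      linarith [hn.le]
    have hbdd : BddBelow ((fun g => dist (hseq N) g) '' Hε τ) := by
      refine ⟨0, ?_⟩
      rintro x ⟨g, _, rfl⟩
      exact dist_nonneg
    calc sInf ((fun g => dist (hseq N) g) '' Hε τ) ≤ dist (hseq N) (hseq m) :=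
          csInf_le hbdd ⟨hseq m, hmem', rfl⟩
      _ ≤ δ / 4 := (hclose m hmS).le
  linarith [hbig N]
end

section
/- Let R : ℕ → ℝ≥0 with R(n) → 0 and R(1) = 1, and let (k_t) be a strictly increasing sequence of positive integers. Define n₁ = 1 and recursively n_t = least n > n_{t-1} such that R(n) ≤ min_{j < t} ( R(n_j)·2^{j−t} / k_t ). Set p_t = C·R(n_t) with C = 1/(Σ_{t≥1} R(n_t)). Then Σ_{t≥1} R(n_t) ≤ 2 (so 1/2 ≤ C ≤ 1), and for every t ≥ 1: Σ_{j > t} p_j / sqrt(n_j) ≤ p_t / sqrt(n_t). -/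
/-- construction of the probability sequence with geometric decay. -/
theorem stmt_14 (R : ℕ → ℝ) (hR0 : ∀ n, 0 ≤ R n) (hR1 : R 1 = 1)
    (hRlim : Filter.Tendsto R Filter.atTop (nhds 0))
    (k : ℕ → ℕ) (hk : StrictMono k) (hk1 : ∀ t, 1 ≤ k t)
    (n : ℕ → ℕ) (hn1 : n 1 = 1)
    (hnrec : ∀ t, 2 ≤ t →
      n (t - 1) < n t ∧
      (∀ j, 1 ≤ j → j < t → R (n t) ≤ R (n j) * (2 : ℝ) ^ ((j : ℤ) - (t : ℤ)) / (k t)) ∧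
      (∀ m, n (t - 1) < m →
        (∀ j, 1 ≤ j → j < t → R m ≤ R (n j) * (2 : ℝ) ^ ((j : ℤ) - (t : ℤ)) / (k t)) →
        n t ≤ m))
    (C : ℝ) (p : ℕ → ℝ)
    (hC : C = 1 / (∑' t : ℕ, R (n (t + 1))))
    (hp : ∀ t, p t = C * R (n t)) :
    (∑' t : ℕ, R (n (t + 1))) ≤ 2 ∧
      ∀ t, 1 ≤ t →
        (∑' j : ℕ, p (j + t + 1) / Real.sqrt (n (j + t + 1))) ≤ p t / Real.sqrt (n t) := by
  have hnmono : ∀ t j, 1 ≤ t → t ≤ j → n t ≤ n j := by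
    intro t j ht htj
    induction j with
    | zero => omega
    | succ j ih =>
      rcases Nat.lt_or_ge t (j + 1) with h | h
      · have h1 := (hnrec (j + 1) (by omega)).1
        simp only [Nat.add_sub_cancel] at h1
        exact le_trans (ih (by omega)) (le_of_lt h1)
      · have : t = j + 1 := by omega
        subst this; rfl
  have hdecay : ∀ t j, 1 ≤ t → t < j →
      R (n j) ≤ R (n t) * (2 : ℝ) ^ ((t : ℤ) - (j : ℤ)) := by
    intro t j ht htj
    have h2 := (hnrec j (by omega)).2.1 t ht htj
    have hk' : (1 : ℝ) ≤ k j := by exact_mod_cast hk1 j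
    have hnn : 0 ≤ R (n t) * (2 : ℝ) ^ ((t : ℤ) - (j : ℤ)) :=
      mul_nonneg (hR0 _) (by positivity)
    exact le_trans h2 (div_le_self hnn hk')
  have hbound : ∀ t : ℕ, R (n (t + 1)) ≤ (1 / 2 : ℝ) ^ t := by
    intro t
    cases t with
    | zero => simp [hn1, hR1]
    | succ t =>
      have hd := hdecay 1 (t + 2) le_rfl (by omega)
      rw [hn1, hR1, one_mul] at hd
      have hpow : (((1:ℕ) : ℤ) - ((t + 2 : ℕ) : ℤ)) = -((t + 1 : ℕ) : ℤ) := by push_cast; ring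
      rw [hpow, zpow_neg, zpow_natCast, ← inv_pow, ← one_div] at hd
      exact hd
  have hsummmajor : Summable (fun t : ℕ => R (n (t + 1))) :=
    Summable.of_nonneg_of_le (fun t => hR0 _) hbound summable_geometric_two
  have hsum : (∑' t : ℕ, R (n (t + 1))) ≤ 2 := by
    calc (∑' t : ℕ, R (n (t + 1))) ≤ ∑' t : ℕ, (1 / 2 : ℝ) ^ t :=
          Summable.tsum_le_tsum hbound hsummmajor summable_geometric_two
      _ = 2 := tsum_geometric_two
  refine ⟨hsum, fun t ht => ?_⟩
  have hC0 : 0 ≤ C := by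
    rw [hC]; exact one_div_nonneg.mpr (tsum_nonneg fun i => hR0 _)
  have hnt1 : 1 ≤ n t := hn1 ▸ hnmono 1 t le_rfl ht
  have hst : 1 ≤ Real.sqrt (n t) := by
    rw [show (1 : ℝ) = Real.sqrt 1 by simp]
    exact Real.sqrt_le_sqrt (by exact_mod_cast hnt1)
  have hstpos : 0 < Real.sqrt (n t) := lt_of_lt_of_le one_pos hst
  have key : ∀ j : ℕ, p (j + t + 1) / Real.sqrt (n (j + t + 1)) ≤
      C * R (n t) / Real.sqrt (n t) * (1 / 2 : ℝ) ^ (j + 1) := by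
    intro j
    have hd := hdecay t (j + t + 1) ht (by omega)
    have hpow : ((t : ℤ) - ((j + t + 1 : ℕ) : ℤ)) = -((j + 1 : ℕ) : ℤ) := by push_cast; ring
    rw [hpow, zpow_neg, zpow_natCast, ← inv_pow, ← one_div] at hd
    have hsm : Real.sqrt (n t) ≤ Real.sqrt (n (j + t + 1)) :=
      Real.sqrt_le_sqrt (by exact_mod_cast hnmono t (j + t + 1) ht (by omega))
    rw [hp]
    calc C * R (n (j + t + 1)) / Real.sqrt (n (j + t + 1))
        ≤ C * (R (n t) * (1 / 2 : ℝ) ^ (j + 1)) / Real.sqrt (n t) := by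
          gcongr
          exact mul_nonneg hC0 (mul_nonneg (hR0 _) (by positivity))
      _ = C * R (n t) / Real.sqrt (n t) * (1 / 2 : ℝ) ^ (j + 1) := by ring
  have hgs : Summable (fun j : ℕ => C * R (n t) / Real.sqrt (n t) * (1 / 2 : ℝ) ^ (j + 1)) := by
    apply Summable.mul_left
    simp_rw [pow_succ]
    exact summable_geometric_two.mul_right _
  have hfs : Summable (fun j : ℕ => p (j + t + 1) / Real.sqrt (n (j + t + 1))) := by
    apply Summable.of_nonneg_of_le _ key hgs
    intro j
    exact div_nonneg (by rw [hp]; exact mul_nonneg hC0 (hR0 _)) (Real.sqrt_nonneg _)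
  calc (∑' j : ℕ, p (j + t + 1) / Real.sqrt (n (j + t + 1)))
      ≤ ∑' j : ℕ, C * R (n t) / Real.sqrt (n t) * (1 / 2 : ℝ) ^ (j + 1) :=
        Summable.tsum_le_tsum key hfs hgs
    _ = C * R (n t) / Real.sqrt (n t) * ∑' j : ℕ, (1 / 2 : ℝ) ^ (j + 1) := tsum_mul_left
    _ = C * R (n t) / Real.sqrt (n t) := by
        have : (∑' j : ℕ, (1 / 2 : ℝ) ^ (j + 1)) = 1 := by
          simp_rw [pow_succ]
          rw [tsum_mul_right, tsum_geometric_two]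
          norm_num
        rw [this, mul_one]
    _ = p t / Real.sqrt (n t) := by rw [hp]
end

section
/- Let H be the class of singleton indicator functions on ℕ together with the all-ones function: H = {1_{{t}} : t ∈ ℕ} ∪ {h₁} where h₁(x) = 1 for all x. Then for every distribution P on ℕ×Bool centered at h₁ (i.e. er_P(h₁) = inf_{h∈H} er_P(h) and inf_{h∈H} P_X{x : h(x) ≠ h₁(x)} = 0), the gap inf{ er_P(h) − er_P(h₁) : h ∈ H, er_P(h) > er_P(h₁) } is positive; equivalently, H has no infinite eluder sequence centered at h₁. But H is infinite and hence has some infinite eluder sequence (centered at the all-zeros function). -/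
open MeasureTheory

/-- An infinite eluder sequence of `H` centered at `h`. -/
def EluderSeq (H : Set (ℕ → Bool)) (h : ℕ → Bool) : Prop :=
  ∃ x : ℕ → ℕ, ∃ g : ℕ → ℕ → Bool,
    (∀ k, g k ∈ H) ∧
    (∀ m : ℕ, ∃ f ∈ H, ∀ i < m, f (x i) = h (x i)) ∧
    (∀ k, (∀ j < k, g k (x j) = h (x j)) ∧ g k (x k) ≠ h (x k))

/-- singletons plus the all-ones function. -/
theorem stmt_16
    (H : Set (ℕ → Bool))
    (hH : H = {h | ∃ t : ℕ, h = fun x => decide (x = t)} ∪ {fun _ => true})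
    (hone : ℕ → Bool) (hone_def : hone = fun _ => true)
    (er : Measure (ℕ × Bool) → (ℕ → Bool) → ℝ)
    (her : ∀ P h, er P h = (P {p | h p.1 ≠ p.2}).toReal) :
    (∀ P : Measure (ℕ × Bool), IsProbabilityMeasure P →
      (∀ h ∈ H, er P hone ≤ er P h) →
      (∀ δ : ℝ, 0 < δ → ∃ h ∈ H, ((P.map Prod.fst) {x | h x ≠ hone x}).toReal < δ) →
      ∃ ε₀ > (0 : ℝ), ∀ h ∈ H, er P hone < er P h → ε₀ ≤ er P h - er P hone) ∧
    ¬ EluderSeq H hone ∧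
    EluderSeq H (fun _ => false) := by
  subst hH hone_def
  refine ⟨?_, ?_, ?_⟩
  · -- Part 1
    intro P hP hmin _
    have mAll : ∀ s : Set (ℕ × Bool), MeasurableSet s := fun s => s.to_countable.measurableSet
    have fin : ∀ s : Set (ℕ × Bool), P s ≠ ⊤ := fun s => measure_ne_top P s
    set A : ℕ → Set (ℕ × Bool) := fun t => {p | p.1 = t ∧ p.2 = true} with hA
    set B : ℕ → Set (ℕ × Bool) := fun t => {p | p.1 = t ∧ p.2 = false} with hB
    set C : ℕ → Set (ℕ × Bool) := fun t => {p | p.1 ≠ t ∧ p.2 = true} with hC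
    set D : ℕ → Set (ℕ × Bool) := fun t => {p | p.1 ≠ t ∧ p.2 = false} with hD
    set a' : ℝ := (P {p | p.2 = true}).toReal with ha'
    set b' : ℝ := (P {p | p.2 = false}).toReal with hb'
    set w' : ℕ → ℝ := fun t => (P (A t)).toReal with hw'
    set v' : ℕ → ℝ := fun t => (P (B t)).toReal with hv'
    set T' : ℕ → ℝ := fun t => (P (C t)).toReal with hT'
    set F' : ℕ → ℝ := fun t => (P (D t)).toReal with hF'
    have nonneg : ∀ s : Set (ℕ × Bool), 0 ≤ (P s).toReal := fun s => ENNReal.toReal_nonneg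
    have erone : er P (fun _ => true) = b' := by
      rw [her, hb']
      congr 2
      ext ⟨x, y⟩
      cases y <;> simp
    have ersing : ∀ t : ℕ, er P (fun x => decide (x = t)) = v' t + T' t := by
      intro t
      rw [her, hv', hT']
      have hset : {p : ℕ × Bool | (decide (p.1 = t)) ≠ p.2} = B t ∪ C t := by
        ext ⟨x, y⟩
        by_cases h : x = t <;> cases y <;> simp [hB, hC, h]
      have hdisj : Disjoint (B t) (C t) := by
        rw [Set.disjoint_left]
        rintro ⟨x, y⟩ hx hy
        exact hy.1 hx.1
      rw [hset, measure_union hdisj (mAll _), ENNReal.toReal_add (fin _) (fin _)]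
    have addT : ∀ t, a' = w' t + T' t := by
      intro t
      have hset : {p : ℕ × Bool | p.2 = true} = A t ∪ C t := by
        ext ⟨x, y⟩
        by_cases h : x = t <;> cases y <;> simp [hA, hC, h]
      have hdisj : Disjoint (A t) (C t) := by
        rw [Set.disjoint_left]
        rintro ⟨x, y⟩ hx hy
        exact hy.1 hx.1
      rw [ha', hw', hT', hset, measure_union hdisj (mAll _),
        ENNReal.toReal_add (fin _) (fin _)]
    have addF : ∀ t, b' = v' t + F' t := by
      intro t
      have hset : {p : ℕ × Bool | p.2 = false} = B t ∪ D t := by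
        ext ⟨x, y⟩
        by_cases h : x = t <;> cases y <;> simp [hB, hD, h]
      have hdisj : Disjoint (B t) (D t) := by
        rw [Set.disjoint_left]
        rintro ⟨x, y⟩ hx hy
        exact hy.1 hx.1
      rw [hb', hv', hF', hset, measure_union hdisj (mAll _),
        ENNReal.toReal_add (fin _) (fin _)]
    have hsingmem : ∀ t : ℕ, (fun x => decide (x = t)) ∈
        ({h | ∃ t : ℕ, h = fun x => decide (x = t)} ∪ {fun _ => true} : Set (ℕ → Bool)) :=
      fun t => Or.inl ⟨t, rfl⟩
    have hmin' : ∀ t : ℕ, b' ≤ v' t + T' t := by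
      intro t
      have := hmin _ (hsingmem t)
      rwa [erone, ersing] at this
    -- tsum facts
    have htsumA : ∑' t, P (A t) = P {p | p.2 = true} := by
      have hset : {p : ℕ × Bool | p.2 = true} = ⋃ t, A t := by
        ext ⟨x, y⟩
        cases y <;> simp [hA]
      rw [hset, measure_iUnion ?_ (fun t => mAll _)]
      intro i j hij
      rw [Function.onFun, Set.disjoint_left]
      rintro ⟨x, y⟩ hx hy
      exact hij (hx.1 ▸ hy.1.symm ▸ rfl)
    have htsumB : ∑' t, P (B t) = P {p | p.2 = false} := by
      have hset : {p : ℕ × Bool | p.2 = false} = ⋃ t, B t := by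
        ext ⟨x, y⟩
        cases y <;> simp [hB]
      rw [hset, measure_iUnion ?_ (fun t => mAll _)]
      intro i j hij
      rw [Function.onFun, Set.disjoint_left]
      rintro ⟨x, y⟩ hx hy
      exact hij (hx.1 ▸ hy.1.symm ▸ rfl)
    have hsumw : Summable w' := ENNReal.summable_toReal (htsumA ▸ fin _)
    have hsumv : Summable v' := ENNReal.summable_toReal (htsumB ▸ fin _)
    have htsumw : ∑' t, w' t = a' := by
      rw [hw', ha', ← htsumA, ENNReal.tsum_toReal_eq (fun t => fin _)]
    have htsumv : ∑' t, v' t = b' := by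
      rw [hv', hb', ← htsumB, ENNReal.tsum_toReal_eq (fun t => fin _)]
    rcases le_or_gt a' b' with hab | hab
    · -- no positive gap at all
      have hTF : ∀ t, T' t ≤ F' t := by
        intro t
        have hsub : Summable (fun t => v' t - w' t) := hsumv.sub hsumw
        have htsub : ∑' t, (v' t - w' t) = b' - a' := by
          rw [Summable.tsum_sub hsumv hsumw, htsumv, htsumw]
        have hkey : v' t - w' t ≤ b' - a' := by
          rw [← htsub]
          refine Summable.le_tsum hsub t (fun j _ => ?_)
          have h1 := addT j
          have h2 := addF j
          have h3 := hmin' j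
          linarith
        have h1 := addT t
        have h2 := addF t
        linarith
      refine ⟨1, one_pos, ?_⟩
      rintro h (⟨t, rfl⟩ | rfl) hlt
      · rw [erone, ersing] at hlt
        have := hTF t
        have := addF t
        linarith
      · exact absurd hlt (lt_irrefl _)
    · -- a' > b'
      set c : ℝ := a' - b' with hc
      have hcpos : 0 < c := by linarith
      have hfin : {t | ENNReal.ofReal (c / 2) ≤ P (A t)}.Finite := by
        refine ENNReal.finite_const_le_of_tsum_ne_top (htsumA ▸ fin _) ?_
        exact (ENNReal.ofReal_pos.mpr (by linarith)).ne'
      set gapf : ℕ → ℝ := fun t => T' t - F' t with hgapf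
      set Fs : Finset ℝ :=
        insert (c / 2) ((hfin.toFinset.filter (fun t => 0 < gapf t)).image gapf) with hFs
      have hne : Fs.Nonempty := ⟨c / 2, Finset.mem_insert_self _ _⟩
      refine ⟨Fs.min' hne, ?_, ?_⟩
      · have hmem := Fs.min'_mem hne
        rcases Finset.mem_insert.mp hmem with h | h
        · rw [h]; linarith
        · obtain ⟨t, ht, heq⟩ := Finset.mem_image.mp h
          rw [← heq]
          exact (Finset.mem_filter.mp ht).2
      · rintro h (⟨t, rfl⟩ | rfl) hlt
        · rw [erone, ersing] at hlt ⊢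
          have hgap : er P (fun x => decide (x = t)) - er P (fun _ => true)
              = gapf t := by
            rw [erone, ersing, hgapf]
            have := addF t
            simp only
            linarith
          have hgappos : 0 < gapf t := by
            have := addF t
            simp only [hgapf]
            linarith
          have hgoal : Fs.min' hne ≤ gapf t → Fs.min' hne ≤ v' t + T' t - b' := by
            intro hle
            have := addF t
            simp only [hgapf] at hle
            linarith
          refine hgoal ?_
          by_cases htmem : t ∈ hfin.toFinset
          · refine Finset.min'_le _ _ ?_
            refine Finset.mem_insert_of_mem (Finset.mem_image.mpr ⟨t, ?_, rfl⟩)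
            exact Finset.mem_filter.mpr ⟨htmem, hgappos⟩
          · have hsmall : w' t < c / 2 := by
              rw [Set.Finite.mem_toFinset] at htmem
              have hlt' : P (A t) < ENNReal.ofReal (c / 2) := lt_of_not_ge htmem
              exact ENNReal.toReal_lt_of_lt_ofReal hlt'
            have hF'le : F' t ≤ b' := by
              have := addF t
              have := nonneg (B t)
              simp only [hv'] at *
              linarith
            have h1 := addT t
            have hc2 : Fs.min' hne ≤ c / 2 :=
              Finset.min'_le _ _ (Finset.mem_insert_self _ _)
            simp only [hgapf]
            linarith
        · exact absurd hlt (lt_irrefl _)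
  · -- Part 2: no eluder sequence centered at hone
    rintro ⟨x, g, hgH, -, hg⟩
    have hsing : ∀ k, ∃ t : ℕ, g k = fun x => decide (x = t) := by
      intro k
      rcases hgH k with ⟨t, ht⟩ | ht
      · exact ⟨t, ht⟩
      · exfalso
        exact (hg k).2 (by rw [ht])
    obtain ⟨t1, ht1⟩ := hsing 1
    obtain ⟨t2, ht2⟩ := hsing 2
    have h10 : x 0 = t1 := by
      have := (hg 1).1 0 (by norm_num)
      rw [ht1] at this
      simpa using this
    have h11 : x 1 ≠ t1 := by
      have := (hg 1).2
      rw [ht1] at this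
      simpa using this
    have h20 : x 0 = t2 := by
      have := (hg 2).1 0 (by norm_num)
      rw [ht2] at this
      simpa using this
    have h21 : x 1 = t2 := by
      have := (hg 2).1 1 (by norm_num)
      rw [ht2] at this
      simpa using this
    exact h11 (by rw [h21, ← h20, h10])
  · -- Part 3: eluder sequence centered at all-zeros
    refine ⟨id, fun k x => decide (x = k), fun k => Or.inl ⟨k, rfl⟩, ?_, ?_⟩
    · intro m
      refine ⟨fun x => decide (x = m), Or.inl ⟨m, rfl⟩, fun i hi => ?_⟩
      simp [Nat.ne_of_lt hi]
    · intro k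
      constructor
      · intro j hj
        simp [Nat.ne_of_lt hj]
      · simp
end

section
/- Let H = {h*₁, h*₂} ∪ {h_i : i ≥ 1} on X = ℕ, where h*₁ = 1_{{0}}, h*₂ = 1 − 1_{{0}}, and h_i = 1_{{0,i}}. Then: (a) H has an infinite eluder sequence centered at h*₁, namely ((i, 0))_{i≥1} witnessed by (h_i); (b) H has no infinite eluder sequence centered at h*₂. -/
/-- the two-target example. -/
theorem stmt_17
    (hstar1 hstar2 : ℕ → Bool)
    (h1d : hstar1 = fun x => decide (x = 0))
    (h2d : hstar2 = fun x => !decide (x = 0))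
    (hi : ℕ → ℕ → Bool)
    (hid : ∀ i, hi i = fun x => decide (x = 0) || decide (x = i))
    (H : Set (ℕ → Bool))
    (hHd : H = {hstar1, hstar2} ∪ {h | ∃ i : ℕ, 1 ≤ i ∧ h = hi i}) :
    EluderSeq H hstar1 ∧ ¬ EluderSeq H hstar2 := by
  constructor
  · refine ⟨fun i => i + 1, fun k => hi (k + 1), ?_, ?_, ?_⟩
    · intro k; rw [hHd]; right; exact ⟨k + 1, by omega, rfl⟩
    · intro m
      refine ⟨hstar1, ?_, fun i _ => rfl⟩
      rw [hHd]; left; left; rfl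
    · intro k
      constructor
      · intro j hj
        show hi (k + 1) (j + 1) = hstar1 (j + 1)
        rw [hid, h1d]
        simp only [decide_eq_true_eq]
        have : ¬ (j + 1 = 0) := by omega
        have h2 : ¬ (j + 1 = k + 1) := by omega
        simp [this, h2]; omega
      · show hi (k + 1) (k + 1) ≠ hstar1 (k + 1)
        rw [hid, h1d]
        simp
  · rintro ⟨x, g, hg, -, hk⟩
    -- analyze g 2: agrees at x 0 and x 1, differs at x 2
    have h20 : g 2 (x 0) = hstar2 (x 0) := (hk 2).1 0 (by omega)
    have h21 : g 2 (x 1) = hstar2 (x 1) := (hk 2).1 1 (by omega)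
    have h22 : g 2 (x 2) ≠ hstar2 (x 2) := (hk 2).2
    have hmem := hg 2
    rw [hHd] at hmem
    rcases hmem with (rfl | rfl) | ⟨i, hi1, heq⟩
    · rw [h1d, h2d] at h20
      simp at h20
    · exact h22 rfl
    · rw [heq] at h20 h21
      have key : ∀ p, hi i (x p) = hstar2 (x p) → x p = i := by
        intro p hp
        rw [hid, h2d] at hp
        simp only [decide_eq_true_eq] at hp
        by_cases h0 : x p = 0
        · simp [h0] at hp
        · by_cases hii : x p = i
          · exact hii
          · simp [h0, hii] at hp
      have e0 := key 0 h20
      have e1 := key 1 h21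
      -- now g 1 agrees at x 0 but differs at x 1 = x 0
      have g10 : g 1 (x 0) = hstar2 (x 0) := (hk 1).1 0 (by omega)
      have g11 : g 1 (x 1) ≠ hstar2 (x 1) := (hk 1).2
      have hx : x 1 = x 0 := by rw [e0, e1]
      rw [hx] at g11
      exact g11 g10
end
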